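/- arXiv:1112.3563 — 2 statements merged into one kernel-verified Lean document; each statement's English description precedes it below -/
import Mathlib

section
/- For every N, the completely bounded Banach–Mazur distance between the column Hilbert space C_N and the row Hilbert space R_N equals N; in particular, for any linear isomorphism u : ℂ^N → ℂ^N with singular values λᵢ and inverse singular values βᵢ, one has N ≤ (Σᵢ |βᵢ|²)^{1/2} (Σᵢ |λᵢ|²)^{1/2} = ‖u⁻¹ : R_N → C_N‖_cb · ‖u : C_N → R_N‖_cb. -/
open scoped BigOperators Kronecker ComplexOrder Matrix

/-- The ℓ²→ℓ² operator norm of a square complex matrix. -/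
noncomputable def opNorm {n : Type*} [Fintype n] [DecidableEq n] (A : Matrix n n ℂ) : ℝ :=
  ‖Matrix.toEuclideanCLM (𝕜 := ℂ) A‖

/-- The trace norm (Schatten-1 norm) of a square complex matrix. -/
noncomputable def traceNorm {n : Type*} [Fintype n] [DecidableEq n] (A : Matrix n n ℂ) : ℝ :=
  (((Matrix.posSemidef_conjTranspose_mul_self A).1.eigenvectorUnitary.1 *
      Matrix.diagonal (((↑) : ℝ → ℂ) ∘ (√·) ∘ (Matrix.posSemidef_conjTranspose_mul_self A).1.eigenvalues) *
      (star (Matrix.posSemidef_conjTranspose_mul_self A).1.eigenvectorUnitary : Matrix n n ℂ)).trace).re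

/-- A singular value decomposition predicate: `u = ∑ i, lam i • |e i⟩⟨f i|` with
orthonormal systems `e`, `f` and nonnegative `lam`. -/
def IsSVD {N : ℕ} (u : Matrix (Fin N) (Fin N) ℂ) (lam : Fin N → ℝ) : Prop :=
  ∃ e f : Fin N → (Fin N → ℂ),
    (∀ i j, star (e i) ⬝ᵥ e j = if i = j then 1 else 0) ∧
    (∀ i j, star (f i) ⬝ᵥ f j = if i = j then 1 else 0) ∧
    (∀ i, 0 ≤ lam i) ∧
    u = ∑ i, (lam i : ℂ) • Matrix.vecMulVec (e i) (star (f i))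

/-!
Write `‖·‖₂` for the Hilbert–Schmidt norm. If `u v = 1` then, by Cauchy–Schwarz for the trace
pairing, `N = |tr (u v)| ≤ ‖u‖₂ ‖v‖₂`, and an SVD `u = ∑ λᵢ |eᵢ⟩⟨fᵢ|` gives `‖u‖₂² = tr (uᴴ u) = ∑ λᵢ²`.
The identity attains `N`.
-/

open Matrix

theorem Matrix.trace_conjTranspose_mul_self_eq_sum_norm_sq {m n : Type*} [Fintype m] [Fintype n]
    (A : Matrix m n ℂ) : (Aᴴ * A).trace = ((∑ i, ∑ j, ‖A i j‖ ^ 2 : ℝ) : ℂ) := by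
  rw [← star_vec_dotProduct_vec]
  simp only [dotProduct, Pi.star_apply, vec, RCLike.star_def, Complex.conj_mul',
    Fintype.sum_prod_type, Complex.ofReal_sum, Complex.ofReal_pow]
  exact Finset.sum_comm

theorem Matrix.norm_trace_mul_le {m n : Type*} [Fintype m] [Fintype n]
    (A : Matrix m n ℂ) (B : Matrix n m ℂ) :
    ‖(A * B).trace‖ ≤ √(∑ i, ∑ j, ‖A i j‖ ^ 2) * √(∑ i, ∑ j, ‖B i j‖ ^ 2) :=
  calc ‖(A * B).trace‖ = ‖∑ p : m × n, A p.1 p.2 * B p.2 p.1‖ := by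
        simp [trace, mul_apply, Fintype.sum_prod_type]
    _ ≤ ∑ p : m × n, ‖A p.1 p.2‖ * ‖B p.2 p.1‖ :=
        (norm_sum_le _ _).trans_eq (by simp only [norm_mul])
    _ ≤ √(∑ p : m × n, ‖A p.1 p.2‖ ^ 2) * √(∑ p : m × n, ‖B p.2 p.1‖ ^ 2) :=
        Real.sum_mul_le_sqrt_mul_sqrt _ _ _
    _ = √(∑ i, ∑ j, ‖A i j‖ ^ 2) * √(∑ i, ∑ j, ‖B i j‖ ^ 2) := by
        rw [Fintype.sum_prod_type, Fintype.sum_prod_type,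
          Finset.sum_comm (f := fun i j => ‖B j i‖ ^ 2)]

namespace IsSVD

variable {N : ℕ} {u : Matrix (Fin N) (Fin N) ℂ} {lam : Fin N → ℝ}

theorem trace_conjTranspose_mul_self (h : IsSVD u lam) :
    (uᴴ * u).trace = ((∑ i, lam i ^ 2 : ℝ) : ℂ) := by
  obtain ⟨e, f, he, hf, -, rfl⟩ := h
  have hf' : ∀ i, f i ⬝ᵥ star (f i) = 1 := fun i => by rw [dotProduct_comm, hf, if_pos rfl]
  simp [conjTranspose_sum, Matrix.sum_mul, Matrix.mul_sum, vecMulVec_mul_vecMulVec, trace_sum, he,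
    apply_ite, hf', sq]

theorem sum_norm_sq_entries (h : IsSVD u lam) : ∑ i, ∑ j, ‖u i j‖ ^ 2 = ∑ i, lam i ^ 2 := by
  exact_mod_cast u.trace_conjTranspose_mul_self_eq_sum_norm_sq.symm.trans
    h.trace_conjTranspose_mul_self

theorem natCast_le_sqrt_mul_sqrt {v : Matrix (Fin N) (Fin N) ℂ} {beta : Fin N → ℝ}
    (huv : u * v = 1) (hu : IsSVD u lam) (hv : IsSVD v beta) :
    (N : ℝ) ≤ √(∑ i, beta i ^ 2) * √(∑ i, lam i ^ 2) :=
  calc (N : ℝ) = ‖(u * v).trace‖ := by simp [huv]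
    _ ≤ √(∑ i, ∑ j, ‖u i j‖ ^ 2) * √(∑ i, ∑ j, ‖v i j‖ ^ 2) := norm_trace_mul_le u v
    _ = √(∑ i, beta i ^ 2) * √(∑ i, lam i ^ 2) := by
        rw [hu.sum_norm_sq_entries, hv.sum_norm_sq_entries, mul_comm]

end IsSVD

theorem isSVD_one (N : ℕ) : IsSVD (1 : Matrix (Fin N) (Fin N) ℂ) 1 := by
  have hstd : ∀ i j : Fin N, star (Pi.single i (1 : ℂ)) ⬝ᵥ Pi.single j 1 = if i = j then 1 else 0 :=
    fun i j => by simp [dotProduct, Pi.single_apply, apply_ite, eq_comm]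
  refine ⟨fun i => Pi.single i 1, fun i => Pi.single i 1, hstd, hstd, fun _ => zero_le_one, ?_⟩
  ext a b
  simp [Matrix.sum_apply, vecMulVec_apply, one_apply, Pi.single_apply, apply_ite, eq_comm]

/-- `d_cb(C_N, R_N) = N`, and the lower bound for any isomorphism. -/
theorem cb_banach_mazur_distance_column_row (N : ℕ) :
    sInf { r : ℝ | ∃ u v : Matrix (Fin N) (Fin N) ℂ, ∃ lam beta : Fin N → ℝ,
        u * v = 1 ∧ v * u = 1 ∧ IsSVD u lam ∧ IsSVD v beta ∧
        r = Real.sqrt (∑ i, beta i ^ 2) * Real.sqrt (∑ i, lam i ^ 2) } = N ∧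
    ∀ (u v : Matrix (Fin N) (Fin N) ℂ) (lam beta : Fin N → ℝ),
      u * v = 1 → v * u = 1 → IsSVD u lam → IsSVD v beta →
      (N : ℝ) ≤ Real.sqrt (∑ i, beta i ^ 2) * Real.sqrt (∑ i, lam i ^ 2) := by
  refine ⟨IsLeast.csInf_eq ⟨⟨1, 1, 1, 1, one_mul 1, one_mul 1, isSVD_one N, isSVD_one N, ?_⟩, ?_⟩,
    fun u v lam beta huv _ hu hv => hu.natCast_le_sqrt_mul_sqrt huv hv⟩
  · simp
  · rintro r ⟨u, v, lam, beta, huv, -, hu, hv, rfl⟩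
    exact hu.natCast_le_sqrt_mul_sqrt huv hv
end

section
/- Let U, V be unitaries on H ⊗ K₁ and H' ⊗ K₂ respectively, with orthonormal families (|i⟩) in H and (|i⟩) in H'. Then ‖Σᵢ ⟨x|U|i⟩ ⊗ ⟨i|V|y⟩‖_{B(K₁⊗K₂)} ≤ 1 for any unit vectors x ∈ H, y ∈ H', where ⟨x|U|i⟩ = (⟨x|⊗1)U(|i⟩⊗1) and ⟨i|V|y⟩ = (⟨i|⊗1)V(|y⟩⊗1). -/
open scoped BigOperators Kronecker ComplexOrder Matrix

/-- The operator block `⟨x|A|y⟩ = (⟨x| ⊗ 1) A (|y⟩ ⊗ 1)` of `A ∈ B(H ⊗ K)`. -/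
noncomputable def blockV {m k : ℕ} (x : Fin m → ℂ) (A : Matrix (Fin m × Fin k) (Fin m × Fin k) ℂ)
    (y : Fin m → ℂ) : Matrix (Fin k) (Fin k) ℂ :=
  Matrix.of fun p q => ∑ a, ∑ b, (starRingEnd ℂ) (x a) * A (a, p) (b, q) * y b

/-! Put `A i = ⟨x|U|i⟩` and `B i = ⟨i|V|y⟩`. The sum `∑ A i ⊗ B i` factors as the block row
`[A i ⊗ 1]ᵢ` times the block column `[1 ⊗ B i]ᵢ`, so its norm is at most
`‖∑ A i A iᴴ‖^{1/2} ‖∑ B iᴴ B i‖^{1/2}` (operator Cauchy–Schwarz). Both sums are `≤ 1`: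
`∑ A i A iᴴ = W P Wᴴ` with `W = ⟨x|U` a coisometry and `P = ∑ |i⟩⟨i| ⊗ 1` a projection, and the
column sum for `V` is the row sum for `Vᴴ`. -/

namespace Matrix

open scoped Matrix.Norms.L2Operator MatrixOrder

variable {ι l m n : Type*}

section KroneckerOrder

variable [Fintype m] [Fintype n]

theorem kronecker_le_kronecker_of_nonneg_right {P Q : Matrix m m ℂ} (hPQ : P ≤ Q)
    {R : Matrix n n ℂ} (hR : 0 ≤ R) : P ⊗ₖ R ≤ Q ⊗ₖ R := by
  have hsub : Q ⊗ₖ R - P ⊗ₖ R = (Q - P) ⊗ₖ R := by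
    rw [sub_eq_iff_eq_add, ← add_kronecker, sub_add_cancel]
  rw [le_iff, hsub]
  exact (le_iff.mp hPQ).kronecker (nonneg_iff_posSemidef.mp hR)

theorem kronecker_le_kronecker_of_nonneg_left {P Q : Matrix n n ℂ} (hPQ : P ≤ Q)
    {R : Matrix m m ℂ} (hR : 0 ≤ R) : R ⊗ₖ P ≤ R ⊗ₖ Q := by
  have hsub : R ⊗ₖ Q - R ⊗ₖ P = R ⊗ₖ (Q - P) := by
    rw [sub_eq_iff_eq_add, ← kronecker_add, sub_add_cancel]
  rw [le_iff, hsub]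
  exact (nonneg_iff_posSemidef.mp hR).kronecker (le_iff.mp hPQ)

variable [DecidableEq m] [DecidableEq n]

theorem l2_opNorm_kronecker_one_le {P : Matrix m m ℂ} (hP : 0 ≤ P) :
    ‖P ⊗ₖ (1 : Matrix n n ℂ)‖ ≤ ‖P‖ := by
  have hP1 : 0 ≤ P ⊗ₖ (1 : Matrix n n ℂ) :=
    ((nonneg_iff_posSemidef.mp hP).kronecker PosSemidef.one).nonneg
  rw [CStarAlgebra.norm_le_iff_le_algebraMap _ (norm_nonneg _) hP1]
  calc P ⊗ₖ (1 : Matrix n n ℂ) ≤ algebraMap ℝ _ ‖P‖ ⊗ₖ 1 :=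
        kronecker_le_kronecker_of_nonneg_right IsSelfAdjoint.le_algebraMap_norm_self zero_le_one
    _ = algebraMap ℝ _ ‖P‖ := by
        simp only [Algebra.algebraMap_eq_smul_one, smul_kronecker, one_kronecker_one]

theorem l2_opNorm_one_kronecker_le {P : Matrix n n ℂ} (hP : 0 ≤ P) :
    ‖(1 : Matrix m m ℂ) ⊗ₖ P‖ ≤ ‖P‖ := by
  have hP1 : 0 ≤ (1 : Matrix m m ℂ) ⊗ₖ P :=
    (PosSemidef.one.kronecker (nonneg_iff_posSemidef.mp hP)).nonneg
  rw [CStarAlgebra.norm_le_iff_le_algebraMap _ (norm_nonneg _) hP1]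
  calc (1 : Matrix m m ℂ) ⊗ₖ P ≤ 1 ⊗ₖ algebraMap ℝ _ ‖P‖ :=
        kronecker_le_kronecker_of_nonneg_left IsSelfAdjoint.le_algebraMap_norm_self zero_le_one
    _ = algebraMap ℝ _ ‖P‖ := by
        simp only [Algebra.algebraMap_eq_smul_one, kronecker_smul, one_kronecker_one]

end KroneckerOrder

theorem sum_kronecker [Fintype ι] {α p q : Type*} [NonUnitalNonAssocSemiring α]
    (A : ι → Matrix m n α) (B : Matrix p q α) : (∑ i, A i) ⊗ₖ B = ∑ i, A i ⊗ₖ B := by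
  ext
  simp only [kroneckerMap_apply, sum_apply, Finset.sum_mul]

theorem kronecker_sum [Fintype ι] {α p q : Type*} [NonUnitalNonAssocSemiring α]
    (A : Matrix p q α) (B : ι → Matrix m n α) : A ⊗ₖ (∑ i, B i) = ∑ i, A ⊗ₖ B i := by
  ext
  simp only [kroneckerMap_apply, sum_apply, Finset.mul_sum]

def blockRow {α : Type*} (M : ι → Matrix m n α) : Matrix m (ι × n) α :=
  of fun r c => M c.1 r c.2

section BlockRow

variable [Fintype ι] [Fintype n]

theorem blockRow_mul_conjTranspose_blockRow (M N : ι → Matrix m n ℂ) :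
    blockRow M * (blockRow N)ᴴ = ∑ i, M i * (N i)ᴴ := by
  ext r r'
  simp only [blockRow, mul_apply, conjTranspose_apply, of_apply, Fintype.sum_prod_type, sum_apply]

variable [Fintype m] [DecidableEq ι] [DecidableEq m] [DecidableEq n]

theorem l2_opNorm_blockRow_mul_self (M : ι → Matrix m n ℂ) :
    ‖blockRow M‖ * ‖blockRow M‖ = ‖∑ i, M i * (M i)ᴴ‖ := by
  rw [← blockRow_mul_conjTranspose_blockRow, ← l2_opNorm_conjTranspose (blockRow M),
    ← l2_opNorm_conjTranspose_mul_self, conjTranspose_conjTranspose]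

theorem l2_opNorm_sum_kronecker_le (A : ι → Matrix m m ℂ) (B : ι → Matrix n n ℂ) :
    ‖∑ i, A i ⊗ₖ B i‖ ≤ √‖∑ i, A i * (A i)ᴴ‖ * √‖∑ i, (B i)ᴴ * B i‖ := by
  set L := blockRow fun i => A i ⊗ₖ (1 : Matrix n n ℂ)
  set R := blockRow fun i => (1 : Matrix m m ℂ) ⊗ₖ (B i)ᴴ
  have hfactor : ∑ i, A i ⊗ₖ B i = L * Rᴴ := by
    simp only [L, R, blockRow_mul_conjTranspose_blockRow, conjTranspose_kronecker,
      conjTranspose_one, conjTranspose_conjTranspose, ← mul_kronecker_mul, mul_one, one_mul]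
  have hL : ‖L‖ ≤ √‖∑ i, A i * (A i)ᴴ‖ := by
    rw [Real.le_sqrt (norm_nonneg _) (norm_nonneg _), sq, l2_opNorm_blockRow_mul_self]
    simp only [conjTranspose_kronecker, conjTranspose_one, ← mul_kronecker_mul, mul_one,
      ← sum_kronecker]
    exact l2_opNorm_kronecker_one_le (Finset.sum_nonneg fun i _ => mul_star_self_nonneg (A i))
  have hR : ‖R‖ ≤ √‖∑ i, (B i)ᴴ * B i‖ := by
    rw [Real.le_sqrt (norm_nonneg _) (norm_nonneg _), sq, l2_opNorm_blockRow_mul_self]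
    simp only [conjTranspose_kronecker, conjTranspose_one, conjTranspose_conjTranspose,
      ← mul_kronecker_mul, mul_one, ← kronecker_sum]
    exact l2_opNorm_one_kronecker_le (Finset.sum_nonneg fun i _ => star_mul_self_nonneg (B i))
  calc ‖∑ i, A i ⊗ₖ B i‖ ≤ ‖L‖ * ‖Rᴴ‖ := hfactor ▸ l2_opNorm_mul L Rᴴ
    _ = ‖L‖ * ‖R‖ := by rw [l2_opNorm_conjTranspose]
    _ ≤ _ := mul_le_mul hL hR (norm_nonneg R) (Real.sqrt_nonneg _)

theorem l2_opNorm_sum_kronecker_le_one {A : ι → Matrix m m ℂ} {B : ι → Matrix n n ℂ}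
    (hA : ∑ i, A i * (A i)ᴴ ≤ 1) (hB : ∑ i, (B i)ᴴ * B i ≤ 1) : ‖∑ i, A i ⊗ₖ B i‖ ≤ 1 := by
  have hA' : ‖∑ i, A i * (A i)ᴴ‖ ≤ 1 :=
    (CStarAlgebra.norm_le_one_iff_of_nonneg _
      (Finset.sum_nonneg fun i _ => mul_star_self_nonneg (A i))).mpr hA
  have hB' : ‖∑ i, (B i)ᴴ * B i‖ ≤ 1 :=
    (CStarAlgebra.norm_le_one_iff_of_nonneg _
      (Finset.sum_nonneg fun i _ => star_mul_self_nonneg (B i))).mpr hB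
  calc ‖∑ i, A i ⊗ₖ B i‖ ≤ √‖∑ i, A i * (A i)ᴴ‖ * √‖∑ i, (B i)ᴴ * B i‖ :=
        l2_opNorm_sum_kronecker_le A B
    _ ≤ 1 * 1 := by gcongr <;> exact Real.sqrt_le_one.mpr ‹_›
    _ = 1 := one_mul 1

end BlockRow

theorem isStarProjection_sum_mul_conjTranspose [Fintype ι] [DecidableEq ι] [Fintype l]
    [Fintype n] [DecidableEq n] {K : ι → Matrix l n ℂ}
    (hK : ∀ i j, (K i)ᴴ * K j = if i = j then 1 else 0) :
    IsStarProjection (∑ i, K i * (K i)ᴴ) := by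
  have horth : ∀ i j, K i * (K i)ᴴ * (K j * (K j)ᴴ) = if i = j then K i * (K i)ᴴ else 0 := by
    intro i j
    rw [Matrix.mul_assoc, ← Matrix.mul_assoc (K i)ᴴ, hK]
    split_ifs with h
    · rw [h, Matrix.one_mul]
    · rw [Matrix.zero_mul, Matrix.mul_zero]
  refine ⟨?_, ?_⟩
  · simp only [IsIdempotentElem, Finset.sum_mul_sum, horth, Finset.sum_ite_eq, Finset.mem_univ,
      if_true]
  · simp [IsSelfAdjoint, star_eq_conjTranspose]

/-- `|x⟩ ⊗ 1 : K → H ⊗ K`. -/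
def ketKronOne {κ : Type*} [DecidableEq κ] (x : m → ℂ) : Matrix (m × κ) κ ℂ :=
  of fun p q => x p.1 * (1 : Matrix κ κ ℂ) p.2 q

theorem conjTranspose_ketKronOne_mul_ketKronOne {κ : Type*} [Fintype m] [Fintype κ]
    [DecidableEq κ] (u v : m → ℂ) :
    (ketKronOne (κ := κ) u)ᴴ * ketKronOne (κ := κ) v = (star u ⬝ᵥ v) • (1 : Matrix κ κ ℂ) := by
  ext q q'
  simp only [ketKronOne, mul_apply, conjTranspose_apply, of_apply, Fintype.sum_prod_type,
    smul_apply, one_apply, dotProduct, Pi.star_apply, smul_eq_mul, Finset.sum_mul]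
  refine Finset.sum_congr rfl fun a _ => ?_
  by_cases h : q = q'
  · simp [h, mul_comm]
  · simp [h, Ne.symm h]

end Matrix

open Matrix

open scoped Matrix.Norms.L2Operator MatrixOrder

theorem blockV_eq_conjTranspose_ketKronOne_mul_mul {m k : ℕ} (x : Fin m → ℂ)
    (A : Matrix (Fin m × Fin k) (Fin m × Fin k) ℂ) (y : Fin m → ℂ) :
    blockV x A y = (ketKronOne (κ := Fin k) x)ᴴ * A * ketKronOne (κ := Fin k) y := by
  ext p q
  simp only [blockV, ketKronOne, mul_apply, conjTranspose_apply, of_apply, Fintype.sum_prod_type,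
    one_apply, apply_ite, star_zero, ite_mul, mul_one, mul_zero, zero_mul, Finset.sum_ite_eq',
    Finset.mem_univ, if_true, Finset.sum_mul]
  exact Finset.sum_comm

theorem conjTranspose_blockV {m k : ℕ} (x : Fin m → ℂ)
    (A : Matrix (Fin m × Fin k) (Fin m × Fin k) ℂ) (y : Fin m → ℂ) :
    (blockV x A y)ᴴ = blockV y Aᴴ x := by
  simp only [blockV_eq_conjTranspose_ketKronOne_mul_mul, conjTranspose_mul,
    conjTranspose_conjTranspose, Matrix.mul_assoc]

theorem sum_blockV_mul_conjTranspose_le_one {ι : Type*} [Fintype ι] [DecidableEq ι] {m k : ℕ}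
    {U : Matrix (Fin m × Fin k) (Fin m × Fin k) ℂ} (hU : U * Uᴴ = 1) {e : ι → Fin m → ℂ}
    (he : ∀ i j, star (e i) ⬝ᵥ e j = if i = j then 1 else 0) {x : Fin m → ℂ}
    (hx : star x ⬝ᵥ x = 1) :
    ∑ i, blockV x U (e i) * (blockV x U (e i))ᴴ ≤ 1 := by
  set W := (ketKronOne (κ := Fin k) x)ᴴ * U
  set P := ∑ i, ketKronOne (κ := Fin k) (e i) * (ketKronOne (κ := Fin k) (e i))ᴴ
  have hW : W * Wᴴ = 1 := by
    rw [conjTranspose_mul, conjTranspose_conjTranspose, Matrix.mul_assoc, ← Matrix.mul_assoc U,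
      hU, Matrix.one_mul, conjTranspose_ketKronOne_mul_ketKronOne, hx, one_smul]
  have hsum : ∑ i, blockV x U (e i) * (blockV x U (e i))ᴴ = W * P * Wᴴ := by
    simp only [W, P, Matrix.mul_sum, Matrix.sum_mul, blockV_eq_conjTranspose_ketKronOne_mul_mul,
      conjTranspose_mul, conjTranspose_conjTranspose, Matrix.mul_assoc]
  have hP : P ≤ 1 := by
    refine (isStarProjection_sum_mul_conjTranspose fun i j => ?_).le_one
    rw [conjTranspose_ketKronOne_mul_ketKronOne, he]
    split_ifs <;> simp
  have hfactor : W * Wᴴ - W * P * Wᴴ = W * (1 - P) * Wᴴ := by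
    rw [Matrix.mul_sub, Matrix.sub_mul, Matrix.mul_one]
  rw [hsum, le_iff, ← hW, hfactor]
  exact (le_iff.mp hP).mul_mul_conjTranspose_same W

/-- `‖Σᵢ ⟨x|U|i⟩ ⊗ ⟨i|V|y⟩‖ ≤ 1` for unitaries `U`, `V`. -/
theorem unitary_block_sum_contractive {m m' k1 k2 N : ℕ}
    (U : Matrix (Fin m × Fin k1) (Fin m × Fin k1) ℂ)
    (V : Matrix (Fin m' × Fin k2) (Fin m' × Fin k2) ℂ)
    (hU : U ∈ Matrix.unitaryGroup (Fin m × Fin k1) ℂ)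
    (hV : V ∈ Matrix.unitaryGroup (Fin m' × Fin k2) ℂ)
    (e : Fin N → (Fin m → ℂ)) (e' : Fin N → (Fin m' → ℂ))
    (he : ∀ i j, star (e i) ⬝ᵥ e j = if i = j then 1 else 0)
    (he' : ∀ i j, star (e' i) ⬝ᵥ e' j = if i = j then 1 else 0)
    (x : Fin m → ℂ) (y : Fin m' → ℂ)
    (hx : star x ⬝ᵥ x = 1) (hy : star y ⬝ᵥ y = 1) :
    opNorm (∑ i, blockV x U (e i) ⊗ₖ blockV (e' i) V y) ≤ 1 := by
  have hV' : Vᴴ * Vᴴᴴ = 1 := by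
    rw [conjTranspose_conjTranspose]
    exact Unitary.star_mul_self_of_mem hV
  have hcol : ∑ i, (blockV (e' i) V y)ᴴ * blockV (e' i) V y ≤ 1 := by
    simpa only [conjTranspose_blockV, conjTranspose_conjTranspose] using
      sum_blockV_mul_conjTranspose_le_one hV' he' hy
  rw [opNorm, l2_opNorm_toEuclideanCLM]
  exact l2_opNorm_sum_kronecker_le_one
    (sum_blockV_mul_conjTranspose_le_one (Unitary.mul_star_self_of_mem hU) he hx) hcol
end
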